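/- Let p, q be positive integers, Σ̂ a real symmetric positive definite p×p matrix, R a real symmetric positive definite q×q matrix, H a real q×p matrix, x̂ᶠ ∈ ℝᵖ and y ∈ ℝ^q. Define J : ℝᵖ → ℝ by J(x) = (1/2)[ (x − x̂ᶠ)ᵀ Σ̂⁻¹ (x − x̂ᶠ) + (y − H x)ᵀ R⁻¹ (y − H x) ]. Then the point x* = x̂ᶠ + Σ̂ Hᵀ (H Σ̂ Hᵀ + R)⁻¹ (y − H x̂ᶠ) is the unique global minimizer of J: for every x ∈ ℝᵖ with x ≠ x*, J(x) > J(x*). -/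

import Mathlib

/-!
The analysis state `xa = xf + K (y - H xf)` is a stationary point of the quadratic `J`:
`Σ̂⁻¹ K = Hᵀ R⁻¹ (1 - H K)`, both sides being `Hᵀ (H Σ̂ Hᵀ + R)⁻¹`. Hence
`J (xa + u) = J xa + ½ (uᵀ Σ̂⁻¹ u + (H u)ᵀ R⁻¹ (H u))`, and the increment is positive for
`u ≠ 0` because `Σ̂⁻¹` is positive definite and `R⁻¹` positive semidefinite.
-/

open Matrix

namespace Matrix

variable {α m n : Type*} [Fintype m] [Fintype n]

lemma IsSymm.dotProduct_mulVec_comm [CommSemiring α] {M : Matrix n n α} (hM : M.IsSymm)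
    (a b : n → α) : a ⬝ᵥ M *ᵥ b = b ⬝ᵥ M *ᵥ a := by
  rw [← dotProduct_transpose_mulVec, hM.eq]

lemma mulVec_dotProduct [CommSemiring α] (H : Matrix m n α) (u : n → α) (v : m → α) :
    (H *ᵥ u) ⬝ᵥ v = u ⬝ᵥ Hᵀ *ᵥ v := by
  rw [dotProduct_transpose_mulVec, dotProduct_comm]

section Kalman

variable [CommRing α] [DecidableEq m] [DecidableEq n]

noncomputable def kalmanGain (P : Matrix n n α) (H : Matrix m n α) (R : Matrix m m α) :
    Matrix n m α :=
  P * Hᵀ * (H * P * Hᵀ + R)⁻¹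

lemma inv_mul_kalmanGain {P : Matrix n n α} {R : Matrix m m α} (H : Matrix m n α)
    (hP : IsUnit P.det) (hR : IsUnit R.det) (hS : IsUnit (H * P * Hᵀ + R).det) :
    P⁻¹ * kalmanGain P H R = Hᵀ * R⁻¹ * (1 - H * kalmanGain P H R) := by
  set S := H * P * Hᵀ + R
  have hHPH : H * P * Hᵀ = S - R := by simp [S]
  have hresid : 1 - H * kalmanGain P H R = (S - H * P * Hᵀ) * S⁻¹ := by
    rw [Matrix.sub_mul, mul_nonsing_inv S hS]
    simp only [kalmanGain, S, Matrix.mul_assoc]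
  calc P⁻¹ * kalmanGain P H R = Hᵀ * S⁻¹ := by
        rw [kalmanGain, Matrix.mul_assoc P, nonsing_inv_mul_cancel_left P _ hP]
    _ = Hᵀ * R⁻¹ * (S - H * P * Hᵀ) * S⁻¹ := by
        rw [hHPH, sub_sub_cancel, nonsing_inv_mul_cancel_right R _ hR]
    _ = Hᵀ * R⁻¹ * (1 - H * kalmanGain P H R) := by
        rw [hresid, Matrix.mul_assoc (Hᵀ * R⁻¹)]

lemma inv_mulVec_kalmanGain_update {P : Matrix n n α} {R : Matrix m m α} (H : Matrix m n α)
    (hP : IsUnit P.det) (hR : IsUnit R.det) (hS : IsUnit (H * P * Hᵀ + R).det)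
    (xf : n → α) (y : m → α) :
    let xa := xf + kalmanGain P H R *ᵥ (y - H *ᵥ xf)
    P⁻¹ *ᵥ (xa - xf) = Hᵀ *ᵥ R⁻¹ *ᵥ (y - H *ᵥ xa) := by
  intro xa
  have hresid : y - H *ᵥ xa = (1 - H * kalmanGain P H R) *ᵥ (y - H *ᵥ xf) := by
    simp only [xa, mulVec_add, sub_mulVec, one_mulVec, mulVec_mulVec]
    abel
  rw [hresid, add_sub_cancel_left, mulVec_mulVec, inv_mul_kalmanGain H hP hR hS,
    mulVec_mulVec, mulVec_mulVec, Matrix.mul_assoc]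

end Kalman

section Cost

variable [CommRing α]

def variationalCost (P : Matrix n n α) (N : Matrix m m α) (H : Matrix m n α) (xf : n → α)
    (y : m → α) (x : n → α) : α :=
  (x - xf) ⬝ᵥ P *ᵥ (x - xf) + (y - H *ᵥ x) ⬝ᵥ N *ᵥ (y - H *ᵥ x)

lemma variationalCost_add_of_stationary {P : Matrix n n α} {N : Matrix m m α} (hP : P.IsSymm)
    (hN : N.IsSymm) (H : Matrix m n α) (xf : n → α) (y : m → α) {xs : n → α}
    (hstat : P *ᵥ (xs - xf) = Hᵀ *ᵥ N *ᵥ (y - H *ᵥ xs)) (u : n → α) :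
    variationalCost P N H xf y (xs + u) =
      variationalCost P N H xf y xs + (u ⬝ᵥ P *ᵥ u + (H *ᵥ u) ⬝ᵥ N *ᵥ (H *ᵥ u)) := by
  have hshift : xs + u - xf = (xs - xf) + u := by abel
  have hresid : y - H *ᵥ (xs + u) = (y - H *ᵥ xs) - H *ᵥ u := by rw [mulVec_add]; abel
  have hcross : u ⬝ᵥ P *ᵥ (xs - xf) = (H *ᵥ u) ⬝ᵥ N *ᵥ (y - H *ᵥ xs) := by
    rw [hstat, mulVec_dotProduct]
  rw [variationalCost, variationalCost, hshift, hresid]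
  generalize xs - xf = a at hcross ⊢
  generalize y - H *ᵥ xs = r at hcross ⊢
  generalize H *ᵥ u = v at hcross ⊢
  simp only [mulVec_add, mulVec_sub, dotProduct_add, add_dotProduct, dotProduct_sub,
    sub_dotProduct]
  rw [hP.dotProduct_mulVec_comm a u, hN.dotProduct_mulVec_comm r v, hcross]
  ring

end Cost

end Matrix

theorem enkf_analysis_unique_minimizer_general (p q : ℕ)
    (Shat : Matrix (Fin p) (Fin p) ℝ) (hShat : Shat.PosDef)
    (R : Matrix (Fin q) (Fin q) ℝ) (hR : R.PosDef)
    (H : Matrix (Fin q) (Fin p) ℝ) (xf : Fin p → ℝ) (y : Fin q → ℝ)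
    (J : (Fin p → ℝ) → ℝ)
    (hJ : ∀ x, J x = (1 / 2) * ((x - xf) ⬝ᵥ (Shat⁻¹ *ᵥ (x - xf)) +
        (y - H *ᵥ x) ⬝ᵥ (R⁻¹ *ᵥ (y - H *ᵥ x)))) :
    ∀ x : Fin p → ℝ,
      x ≠ xf + (Shat * Hᵀ * (H * Shat * Hᵀ + R)⁻¹) *ᵥ (y - H *ᵥ xf) →
        J (xf + (Shat * Hᵀ * (H * Shat * Hᵀ + R)⁻¹) *ᵥ (y - H *ᵥ xf)) < J x := by
  intro x hx
  set xa := xf + kalmanGain Shat H R *ᵥ (y - H *ᵥ xf)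
  have hu : x - xa ≠ 0 := sub_ne_zero.mpr hx
  have hS : (H * Shat * Hᵀ + R).PosDef := by
    simpa only [conjTranspose_eq_transpose_of_trivial] using
      PosDef.posSemidef_add (hShat.posSemidef.mul_mul_conjTranspose_same H) hR
  have hstat := inv_mulVec_kalmanGain_update H
    (Shat.isUnit_iff_isUnit_det.mp hShat.isUnit) (R.isUnit_iff_isUnit_det.mp hR.isUnit)
    ((H * Shat * Hᵀ + R).isUnit_iff_isUnit_det.mp hS.isUnit) xf y
  have hdecomp := variationalCost_add_of_stationary
    (isHermitian_iff_isSymm.mp hShat.inv.isHermitian)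
    (isHermitian_iff_isSymm.mp hR.inv.isHermitian) H xf y hstat (x - xa)
  have hpos : 0 < (x - xa) ⬝ᵥ Shat⁻¹ *ᵥ (x - xa) + (H *ᵥ (x - xa)) ⬝ᵥ R⁻¹ *ᵥ (H *ᵥ (x - xa)) :=
    add_pos_of_pos_of_nonneg
      (by simpa only [star_trivial] using hShat.inv.dotProduct_mulVec_pos hu)
      (by simpa only [star_trivial] using
        hR.inv.posSemidef.dotProduct_mulVec_nonneg (H *ᵥ (x - xa)))
  have hJcost : ∀ z, J z = 1 / 2 * variationalCost Shat⁻¹ R⁻¹ H xf y z := hJ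
  rw [add_sub_cancel] at hdecomp
  change J xa < J x
  rw [hJcost, hJcost, hdecomp]
  linarith

/-- For `Σ̂` symmetric positive definite (p×p), `R` symmetric positive
definite (q×q), `H` a q×p matrix, `x̂ᶠ ∈ ℝᵖ`, `y ∈ ℝ^q` and the objective
`J(x) = (1/2)[(x − x̂ᶠ)ᵀ Σ̂⁻¹ (x − x̂ᶠ) + (y − H x)ᵀ R⁻¹ (y − H x)]`, the point
`x* = x̂ᶠ + Σ̂ Hᵀ (H Σ̂ Hᵀ + R)⁻¹ (y − H x̂ᶠ)` is the unique global minimizer of `J`: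
`J(x) > J(x*)` for every `x ≠ x*`. -/
theorem enkf_analysis_unique_minimizer (p q : ℕ) (hp : 0 < p) (hq : 0 < q)
    (Shat : Matrix (Fin p) (Fin p) ℝ) (hShat : Shat.PosDef)
    (R : Matrix (Fin q) (Fin q) ℝ) (hR : R.PosDef)
    (H : Matrix (Fin q) (Fin p) ℝ) (xf : Fin p → ℝ) (y : Fin q → ℝ)
    (J : (Fin p → ℝ) → ℝ)
    (hJ : ∀ x, J x = (1 / 2) * ((x - xf) ⬝ᵥ (Shat⁻¹ *ᵥ (x - xf)) +
        (y - H *ᵥ x) ⬝ᵥ (R⁻¹ *ᵥ (y - H *ᵥ x)))) :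
    ∀ x : Fin p → ℝ,
      x ≠ xf + (Shat * Hᵀ * (H * Shat * Hᵀ + R)⁻¹) *ᵥ (y - H *ᵥ xf) →
        J (xf + (Shat * Hᵀ * (H * Shat * Hᵀ + R)⁻¹) *ᵥ (y - H *ᵥ xf)) < J x :=
  enkf_analysis_unique_minimizer_general p q Shat hShat R hR H xf y J hJ
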